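/- Let ψ(w) = (1−w)(e^{−2πiw} + e^{−4πiw}) + (1/(3πi))(1 − e^{−6πiw}) for w ∈ [0,1]. Then for w ∈ [0,1/3], |ψ(w)| = 2(1−w)cos(πw) + (2/(3π))sin(3πw). -/

import Mathlib

open Real

/-- The Fourier transform of the localizing function `φ` on `[0,1]`. -/
noncomputable def psi (w : ℝ) : ℂ :=
  (1 - (w : ℂ)) * (Complex.exp (-2 * (π : ℂ) * Complex.I * (w : ℂ)) +
      Complex.exp (-4 * (π : ℂ) * Complex.I * (w : ℂ))) +
    (1 / (3 * (π : ℂ) * Complex.I)) * (1 - Complex.exp (-6 * (π : ℂ) * Complex.I * (w : ℂ)))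

/-!
Factoring out the unimodular `e^{-3πiw}` from every term of `ψ(w)` leaves the real number
`2(1-w)cos(πw) + (2/(3π))sin(3πw)`, which is nonnegative for `w ∈ [0,1/3]` and hence equal
to `|ψ(w)|`.
-/

namespace Complex

theorem exp_neg_sub_mul_I_add_exp_neg_add_mul_I (θ φ : ℂ) :
    exp (-(θ - φ) * I) + exp (-(θ + φ) * I) = exp (-θ * I) * (2 * cos φ) := by
  rw [two_cos, mul_add, ← exp_add, ← exp_add]
  ring_nf

theorem one_sub_exp_neg_two_mul_mul_I (θ : ℂ) :
    1 - exp (-(2 * θ) * I) = exp (-θ * I) * (2 * sin θ * I) := by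
  rw [two_sin, mul_assoc, I_mul_I, mul_neg_one, neg_sub, mul_sub, ← exp_add, ← exp_add]
  ring_nf
  rw [exp_zero]
  ring

end Complex

noncomputable def psiModulus (w : ℝ) : ℝ :=
  2 * (1 - w) * Real.cos (π * w) + (2 / (3 * π)) * Real.sin (3 * π * w)

open Complex in
theorem psi_eq_exp_mul_psiModulus (w : ℝ) :
    psi w = exp ((-3 * π * w : ℝ) * I) * psiModulus w := by
  have h2 : -2 * (π : ℂ) * I * w = -(3 * π * w - π * w) * I := by ring
  have h4 : -4 * (π : ℂ) * I * w = -(3 * π * w + π * w) * I := by ring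
  have h6 : -6 * (π : ℂ) * I * w = -(2 * (3 * π * w)) * I := by ring
  have hπ : (π : ℂ) ≠ 0 := ofReal_ne_zero.mpr pi_ne_zero
  rw [psi, h2, h4, h6, exp_neg_sub_mul_I_add_exp_neg_add_mul_I, one_sub_exp_neg_two_mul_mul_I,
    psiModulus]
  push_cast
  field_simp

theorem psiModulus_nonneg {w : ℝ} (hw : w ∈ Set.Icc (0 : ℝ) (1 / 3)) :
    0 ≤ psiModulus w := by
  obtain ⟨hw0, hw1⟩ := hw
  have hcos : 0 ≤ Real.cos (π * w) :=
    Real.cos_nonneg_of_mem_Icc ⟨by nlinarith [pi_pos], by nlinarith [pi_pos]⟩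
  have hsin : 0 ≤ Real.sin (3 * π * w) :=
    Real.sin_nonneg_of_nonneg_of_le_pi (by positivity) (by nlinarith [pi_pos])
  have h1w : 0 ≤ 1 - w := by linarith
  unfold psiModulus
  positivity

theorem abs_psi_eq (w : ℝ) (hw : w ∈ Set.Icc (0 : ℝ) (1 / 3)) :
    ‖psi w‖ = 2 * (1 - w) * Real.cos (π * w) + (2 / (3 * π)) * Real.sin (3 * π * w) := by
  rw [psi_eq_exp_mul_psiModulus, norm_mul, Complex.norm_exp_ofReal_mul_I, one_mul,
    Complex.norm_real, Real.norm_of_nonneg (psiModulus_nonneg hw), psiModulus]
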